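/- arXiv:1405.2225 — 3 statements merged into one kernel-verified Lean document; each statement's English description precedes it below -/
import Mathlib

section
/- Let Σ be a compatible split system on X. Then there exists a hierarchical partition system Π on X with Σ_Π = Σ if and only if the weak X-tree T_Σ has a vertex ρ such that d_{T_Σ}(ρ, u) = d_{T_Σ}(ρ, v) for all labelled vertices u and v of T_Σ. -/
open scoped Classical

/-- A weak X-tree: a finite tree together with a labelling map `lab : X → V`
such that every degree-one vertex (i.e. vertex with a unique neighbour) is labelled. -/
structure WeakXTree (X : Type) [Fintype X] [DecidableEq X] where
  V : Type
  [fintypeV : Fintype V]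
  [decEqV : DecidableEq V]
  G : SimpleGraph V
  isTree : G.IsTree
  lab : X → V
  leaf_labelled : ∀ v : V, (∃! w : V, G.Adj v w) → v ∈ Set.range lab

attribute [instance] WeakXTree.fintypeV WeakXTree.decEqV

variable {X : Type} [Fintype X] [DecidableEq X]

namespace WeakXTree

/-- A leaf is a vertex with a unique neighbour (degree one). -/
def IsLeaf (T : WeakXTree X) (v : T.V) : Prop := ∃! w : T.V, T.G.Adj v w

/-- The split of `X` displayed by an edge `e` of the tree: the (two) sets
`φ⁻¹(V₁)`, `φ⁻¹(V₂)` where `V₁, V₂` are the components of `T ∖ e`. -/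
noncomputable def splitOf (T : WeakXTree X) (e : Sym2 T.V) : Finset (Finset X) :=
  Finset.image (fun u : T.V =>
    Finset.univ.filter (fun x : X => (T.G.deleteEdges {e}).Reachable u (T.lab x)))
    Finset.univ

/-- The multiset of splits displayed by the edges of a weak X-tree. -/
noncomputable def splits (T : WeakXTree X) : Multiset (Finset (Finset X)) :=
  T.G.edgeFinset.val.map T.splitOf

end WeakXTree

/-- A partition of `X`: nonempty parts, every element of `X` in exactly one part. -/
def IsPartition (π : Finset (Finset X)) : Prop :=
  (∀ A ∈ π, A.Nonempty) ∧ ∀ x : X, ∃! A : Finset X, A ∈ π ∧ x ∈ A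

/-- A split of `X` is a partition of `X` into exactly two parts. -/
def IsSplit (σ : Finset (Finset X)) : Prop := IsPartition σ ∧ σ.card = 2

/-- A split system on `X` is a multiset of splits of `X`. -/
def IsSplitSystem (S : Multiset (Finset (Finset X))) : Prop := ∀ σ ∈ S, IsSplit σ

/-- Two splits `{A₁,B₁}` and `{A₂,B₂}` are compatible if one of the four
intersections of a part of one with a part of the other is empty. -/
def SplitsCompatible (σ₁ σ₂ : Finset (Finset X)) : Prop :=
  ∃ A ∈ σ₁, ∃ B ∈ σ₂, A ∩ B = ∅

/-- A split system is compatible if its splits are pairwise compatible. -/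
def CompatibleSystem (S : Multiset (Finset (Finset X))) : Prop :=
  ∀ σ₁ ∈ S, ∀ σ₂ ∈ S, SplitsCompatible σ₁ σ₂

/-- A partition system on `X`: a multiset of partitions of `X` into at least two parts. -/
def IsPartitionSystem (P : Multiset (Finset (Finset X))) : Prop :=
  ∀ π ∈ P, IsPartition π ∧ 2 ≤ π.card

/-- The multiset of splits `{A, X − A}` for `A` a part of the partition `π`. -/
def partitionSplits (π : Finset (Finset X)) : Multiset (Finset (Finset X)) :=
  π.val.map (fun A => ({A, Aᶜ} : Finset (Finset X)))

/-- `Σ_Π`: the multiset union over `π ∈ Π` of the splits `{A, X − A}`, `A ∈ π`. -/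
def systemSplits (P : Multiset (Finset (Finset X))) : Multiset (Finset (Finset X)) :=
  P.bind partitionSplits

/-- A partition system is strongly compatible if any two of its partitions are
equal or have parts whose union is `X`. -/
def StronglyCompatible (P : Multiset (Finset (Finset X))) : Prop :=
  ∀ π₁ ∈ P, ∀ π₂ ∈ P, π₁ = π₂ ∨ ∃ A ∈ π₁, ∃ B ∈ π₂, A ∪ B = Finset.univ

namespace WeakXTree

/-- A weak X-tree is even if all pairwise distances between labelled vertices are even. -/
def IsEven (T : WeakXTree X) : Prop :=
  ∀ x y : X, Even (T.G.dist (T.lab x) (T.lab y))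

/-- A vertex of a weak X-tree is even if it has even distance to some leaf. -/
def EvenVertex (T : WeakXTree X) (v : T.V) : Prop :=
  ∃ l : T.V, T.IsLeaf l ∧ Even (T.G.dist v l)

/-- A set `E` of edges of `T` displays the partition `π` if there is a bijection
`ξ : π → E` with `σ_{ξ(A)} = {A, X − A}` for each part `A ∈ π`. -/
def Displays (T : WeakXTree X) (E : Finset (Sym2 T.V)) (π : Finset (Finset X)) : Prop :=
  ↑E ⊆ T.G.edgeSet ∧ ∃ ξ : Finset X → Sym2 T.V,
    Set.BijOn ξ ↑π ↑E ∧ ∀ A ∈ π, T.splitOf (ξ A) = {A, Aᶜ}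

/-- The partition `π(v)` displayed by a vertex `v`: `x` and `y` are in the same
part iff the path from `φ(x)` to `φ(y)` does not pass through `v`. -/
noncomputable def vertexPartition (T : WeakXTree X) (v : T.V) : Finset (Finset X) :=
  Finset.image (fun x : X => Finset.univ.filter (fun y : X =>
    ∀ p : T.G.Walk (T.lab x) (T.lab y), p.IsPath → v ∉ p.support)) Finset.univ

end WeakXTree

/-- A partition system is hierarchical if the collection of all parts of its
partitions is a hierarchy: any two parts are disjoint or nested. -/
def Hierarchical (P : Multiset (Finset (Finset X))) : Prop :=
  ∀ π₁ ∈ P, ∀ π₂ ∈ P, ∀ A ∈ π₁, ∀ B ∈ π₂,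
    A ∩ B = ∅ ∨ A ∩ B = A ∨ A ∩ B = B

/-!
An edge of `T` separates two labels exactly when its split does, so the distance between
labelled vertices counts the splits separating them. If `Σ = Σ_Π` with `Π` hierarchical, this
count is `2 |Π| - 2 c(x, y)`, where `c(x, y)` is the number of parts containing both `x` and `y`.
In a hierarchy `c` satisfies `c(x, z) ≥ min (c(x, y), c(y, z))`, so the distances between labels
are even and ultrametric, and the midpoint of a diametral pair of labels is equidistant from all
of them.

Conversely, if every label is at distance `r` from `ρ`, the path from `ρ` to a label has exactly
one edge at each depth `1, …, r`. Hence, for each depth `k`, the label sets beyond the edges at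
depth `k` partition `X`; these `r` partitions display every edge exactly once, and sets beyond
edges, seen from a common root, are nested or disjoint.
-/

namespace SimpleGraph

variable {V : Type} {G : SimpleGraph V}

def Separates (G : SimpleGraph V) (e : Sym2 V) (u v : V) : Prop :=
  ¬ (G.deleteEdges {e}).Reachable u v

theorem Separates.symm {e : Sym2 V} {u v : V} (h : G.Separates e u v) : G.Separates e v u :=
  fun hr => h hr.symm

theorem Walk.reachable_deleteEdges_or {a b w z : V} (p : G.Walk w z) :
    (G.deleteEdges {s(a, b)}).Reachable w z ∨ (G.deleteEdges {s(a, b)}).Reachable w a ∨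
      (G.deleteEdges {s(a, b)}).Reachable w b := by
  induction p with
  | nil => exact Or.inl .rfl
  | @cons u x y hux q ih =>
    by_cases he : s(u, x) = s(a, b)
    · rcases Sym2.eq_iff.mp he with ⟨rfl, -⟩ | ⟨rfl, -⟩
      · exact Or.inr (Or.inl .rfl)
      · exact Or.inr (Or.inr .rfl)
    · have hstep : (G.deleteEdges {s(a, b)}).Reachable u x :=
        (show (G.deleteEdges {s(a, b)}).Adj u x by simp [hux, he]).reachable
      exact ih.imp hstep.trans (Or.imp hstep.trans hstep.trans)

namespace IsTree

theorem separates_of_adj (hG : G.IsTree) {a b : V} (hab : G.Adj a b) :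
    G.Separates s(a, b) a b :=
  isBridge_iff.mp (isAcyclic_iff_forall_isBridge.mp hG.isAcyclic hab)

/-- In a tree, every vertex lies on the side of exactly one endpoint of a deleted edge. -/
theorem separates_iff (hG : G.IsTree) {a b : V} (hab : G.Adj a b) (u v : V) :
    G.Separates s(a, b) u v ↔
      ¬((G.deleteEdges {s(a, b)}).Reachable u a ↔ (G.deleteEdges {s(a, b)}).Reachable v a) := by
  have hside : ∀ w, (G.deleteEdges {s(a, b)}).Reachable w a ∨
      (G.deleteEdges {s(a, b)}).Reachable w b := fun w => by
    obtain ⟨p⟩ := hG.connected.preconnected w a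
    rcases p.reachable_deleteEdges_or with h | h | h <;> tauto
  refine ⟨fun hsep hiff => ?_, fun hne huv => hne ⟨huv.symm.trans, huv.trans⟩⟩
  rcases hside u with hu | hu
  · exact hsep (hu.trans (hiff.mp hu).symm)
  · have hua : ¬ (G.deleteEdges {s(a, b)}).Reachable u a := fun h =>
      hG.separates_of_adj hab (h.symm.trans hu)
    rcases hside v with hv | hv
    · exact hua (hiff.mpr hv)
    · exact hsep (hu.trans hv.symm)

theorem separates_iff_separates_iff_not (hG : G.IsTree) {e : Sym2 V} (he : e ∈ G.edgeSet)
    (u v w : V) :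
    G.Separates e u w ↔ (G.Separates e u v ↔ ¬ G.Separates e v w) := by
  induction e with
  | _ a b =>
    simp only [hG.separates_iff he]
    tauto

theorem separates_iff_mem_edges (hG : G.IsTree) (e : Sym2 V) {u v : V} {p : G.Walk u v}
    (hp : p.IsPath) :
    G.Separates e u v ↔ e ∈ p.edges := by
  induction e with
  | _ a b =>
    rw [Separates, reachable_deleteEdges_iff_exists_walk, not_exists_not]
    refine ⟨fun h => h p, fun h q => ?_⟩
    have hq : q.bypass = p := (hG.existsUnique_path u v).unique q.bypass_isPath hp
    exact q.edges_bypass_subset_edges (hq ▸ h)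

end IsTree

def beyond (G : SimpleGraph V) (ρ : V) (e : Sym2 V) : Set V := {v | G.Separates e ρ v}

theorem IsTree.exists_eq_and_separates (hG : G.IsTree) {e : Sym2 V} (he : e ∈ G.edgeSet)
    (ρ : V) : ∃ a b, e = s(a, b) ∧ ¬ G.Separates e ρ a ∧ G.Separates e ρ b := by
  induction e with
  | _ a b =>
    have hab := (hG.separates_iff_separates_iff_not he a ρ b).mp (hG.separates_of_adj he)
    by_cases hρa : G.Separates s(a, b) ρ a
    · exact ⟨b, a, Sym2.eq_swap, fun hρb => hab.mp hρa.symm hρb, hρa⟩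
    · exact ⟨a, b, rfl, hρa, by_contra fun hρb => hρa (hab.mpr hρb).symm⟩

theorem IsTree.beyond_subset_of_mem (hG : G.IsTree) {ρ a b : V} {e : Sym2 V}
    (ha : a ∈ G.beyond ρ e) : G.beyond ρ s(a, b) ⊆ G.beyond ρ e := by
  intro v hv
  obtain ⟨p, hp, -⟩ := hG.existsUnique_path ρ v
  have hf : s(a, b) ∈ p.edges := (hG.separates_iff_mem_edges _ hp).mp hv
  have hsupp : a ∈ p.support := p.fst_mem_support_of_mem_edges hf
  have he := (hG.separates_iff_mem_edges e (hp.takeUntil hsupp)).mp ha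
  exact (hG.separates_iff_mem_edges e hp).mpr (p.edges_takeUntil_subset_edges hsupp he)

theorem IsTree.beyond_subset_or_subset (hG : G.IsTree) {e f : Sym2 V} (he : e ∈ G.edgeSet)
    (hf : f ∈ G.edgeSet) {ρ v : V} (hve : v ∈ G.beyond ρ e) (hvf : v ∈ G.beyond ρ f) :
    G.beyond ρ e ⊆ G.beyond ρ f ∨ G.beyond ρ f ⊆ G.beyond ρ e := by
  obtain ⟨a, b, rfl, ha, hb⟩ := hG.exists_eq_and_separates hf ρ
  obtain ⟨c, d, rfl, hc, hd⟩ := hG.exists_eq_and_separates he ρ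
  by_cases h₁ : a ∈ G.beyond ρ s(c, d)
  · exact Or.inr (hG.beyond_subset_of_mem h₁)
  by_cases h₂ : b ∈ G.beyond ρ s(c, d)
  · exact Or.inr (Sym2.eq_swap (a := a) ▸ hG.beyond_subset_of_mem h₂)
  by_cases h₃ : c ∈ G.beyond ρ s(a, b)
  · exact Or.inl (hG.beyond_subset_of_mem h₃)
  by_cases h₄ : d ∈ G.beyond ρ s(a, b)
  · exact Or.inl (Sym2.eq_swap (a := c) ▸ hG.beyond_subset_of_mem h₄)
  -- Both edges lie on the path from `ρ` to `v`, yet neither is beyond the other: re-rooting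
  -- at `d` puts `v` beyond `s(c, d)` and on the root side of it at once.
  exfalso
  simp only [beyond, Set.mem_ofPred_eq] at *
  have hdv : G.Separates s(a, b) d v :=
    (hG.separates_iff_separates_iff_not hf d ρ v).mpr (by tauto)
  have hda : G.Separates s(c, d) d a :=
    (hG.separates_iff_separates_iff_not he d ρ a).mpr (by tauto)
  have := hG.beyond_subset_of_mem (b := b) hda hdv
  have := (hG.separates_iff_separates_iff_not he d ρ v).mp this
  tauto

theorem IsTree.eq_of_beyond_eq (hG : G.IsTree) {e f : Sym2 V} (he : e ∈ G.edgeSet)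
    (hf : f ∈ G.edgeSet) {ρ : V} (h : G.beyond ρ e = G.beyond ρ f) : e = f := by
  obtain ⟨c, d, rfl, hc, hd⟩ := hG.exists_eq_and_separates he ρ
  have hfc : ¬ G.Separates f ρ c := fun hfc => hc (h ▸ hfc : c ∈ G.beyond ρ s(c, d))
  have hfd : G.Separates f ρ d := (h ▸ hd : d ∈ G.beyond ρ f)
  have hcd : G.Separates f c d := (hG.separates_iff_separates_iff_not hf c ρ d).mpr (by tauto)
  have hadj : G.Adj c d := he
  have := (hG.separates_iff_mem_edges f (p := .cons hadj .nil)
    (Walk.IsPath.nil.cons (by simpa using hadj.ne))).mp hcd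
  simpa [eq_comm] using this

theorem Connected.exists_dist_eq_and_dist_add_dist_eq (hG : G.Connected) (a b : V) {k : ℕ}
    (hk : k ≤ G.dist a b) :
    ∃ m, G.dist a m = k ∧ G.dist a m + G.dist m b = G.dist a b := by
  obtain ⟨p, -, hp⟩ := hG.exists_path_of_dist a b
  have h₁ : G.dist a (p.getVert k) ≤ k := (dist_le (p.take k)).trans (by simp)
  have h₂ : G.dist (p.getVert k) b ≤ G.dist a b - k := (dist_le (p.drop k)).trans (by simp [hp])
  have h₃ : G.dist a b ≤ G.dist a (p.getVert k) + G.dist (p.getVert k) b := hG.dist_triangle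
  exact ⟨p.getVert k, by omega, by omega⟩

section Distance

variable [Fintype V]

noncomputable def separatingEdges (G : SimpleGraph V) (u v : V) : Finset (Sym2 V) :=
  G.edgeFinset.filter (G.Separates · u v)

theorem mem_separatingEdges {e : Sym2 V} {u v : V} :
    e ∈ G.separatingEdges u v ↔ e ∈ G.edgeSet ∧ G.Separates e u v := by
  simp [separatingEdges]

theorem IsTree.separatingEdges_eq (hG : G.IsTree) {u v : V} {p : G.Walk u v} (hp : p.IsPath) :
    G.separatingEdges u v = p.edges.toFinset := by
  ext e
  rw [mem_separatingEdges, List.mem_toFinset, hG.separates_iff_mem_edges e hp]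
  exact ⟨And.right, fun h => ⟨p.edges_subset_edgeSet h, h⟩⟩

theorem IsTree.card_separatingEdges (hG : G.IsTree) (u v : V) :
    (G.separatingEdges u v).card = G.dist u v := by
  obtain ⟨p, hp, hlen⟩ := hG.connected.exists_path_of_dist u v
  rw [hG.separatingEdges_eq hp, List.toFinset_card_of_nodup hp.isTrail.edges_nodup,
    Walk.length_edges, hlen]

theorem IsTree.dist_add_dist_eq_iff_disjoint (hG : G.IsTree) (u v w : V) :
    G.dist u v + G.dist v w = G.dist u w ↔
      Disjoint (G.separatingEdges u v) (G.separatingEdges v w) := by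
  classical
  rw [← hG.card_separatingEdges u v, ← hG.card_separatingEdges v w,
    ← hG.card_separatingEdges u w]
  set s := G.separatingEdges u v
  set t := G.separatingEdges v w
  have hsymm : G.separatingEdges u w = symmDiff s t := by
    ext e
    simp only [Finset.mem_symmDiff, s, t, mem_separatingEdges]
    constructor
    · rintro ⟨he, huw⟩
      have := (hG.separates_iff_separates_iff_not he u v w).mp huw
      tauto
    · rintro (⟨⟨he, huv⟩, hvw⟩ | ⟨⟨he, hvw⟩, huv⟩)
      · exact ⟨he, (hG.separates_iff_separates_iff_not he u v w).mpr (by tauto)⟩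
      · exact ⟨he, (hG.separates_iff_separates_iff_not he u v w).mpr (by tauto)⟩
  rw [hsymm]
  refine ⟨fun h => ?_, fun h => by
    rw [Finset.symmDiff_eq_union h, Finset.card_union_of_disjoint h]⟩
  rw [← Finset.card_union_eq_card_add_card]
  have := Finset.card_le_card (symmDiff_le_sup : symmDiff s t ≤ s ⊔ t)
  have := Finset.card_union_le s t
  rw [Finset.sup_eq_union] at *
  omega

theorem IsTree.dist_add_dist_eq_or (hG : G.IsTree) {a b m : V}
    (hm : G.dist a m + G.dist m b = G.dist a b) (w : V) :
    G.dist a m + G.dist m w = G.dist a w ∨ G.dist b m + G.dist m w = G.dist b w := by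
  simp only [hG.dist_add_dist_eq_iff_disjoint] at hm ⊢
  by_contra! h
  obtain ⟨e, hae, hwe⟩ := Finset.not_disjoint_iff.mp h.1
  obtain ⟨f, hbf, hwf⟩ := Finset.not_disjoint_iff.mp h.2
  rw [mem_separatingEdges] at hae hwe hbf hwf
  have hmb : f ∈ G.separatingEdges m b := mem_separatingEdges.mpr ⟨hbf.1, hbf.2.symm⟩
  rcases hG.beyond_subset_or_subset hwe.1 hwf.1 hwe.2 hwf.2 with hef | hfe
  · have haf : G.Separates f a m := (hef hae.2.symm : G.Separates f m a).symm
    exact Finset.disjoint_left.mp hm (mem_separatingEdges.mpr ⟨hwf.1, haf⟩) hmb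
  · exact Finset.disjoint_left.mp hm (mem_separatingEdges.mpr hae)
      (mem_separatingEdges.mpr ⟨hwe.1, hfe hbf.2.symm⟩)

/-- The edges whose far side contains that of `e` are those on the path from `ρ` through `e`, so
this is the distance from `ρ` to the far endpoint of `e`. -/
noncomputable def depth (G : SimpleGraph V) (ρ : V) (e : Sym2 V) : ℕ :=
  (G.edgeFinset.filter fun f => G.beyond ρ e ⊆ G.beyond ρ f).card

theorem one_le_depth {e : Sym2 V} (he : e ∈ G.edgeSet) (ρ : V) : 1 ≤ G.depth ρ e :=
  Finset.card_pos.mpr ⟨e, by simpa using he⟩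

theorem IsTree.depth_le_dist (hG : G.IsTree) {ρ w : V} {e : Sym2 V} (hw : w ∈ G.beyond ρ e) :
    G.depth ρ e ≤ G.dist ρ w := by
  rw [← hG.card_separatingEdges]
  refine Finset.card_le_card fun f hf => ?_
  rw [Finset.mem_filter, mem_edgeFinset] at hf
  exact mem_separatingEdges.mpr ⟨hf.1, hf.2 hw⟩

theorem IsTree.depth_injOn (hG : G.IsTree) (ρ w : V) :
    Set.InjOn (G.depth ρ) (G.separatingEdges ρ w) := by
  have key : ∀ {e f}, e ∈ G.edgeSet → f ∈ G.edgeSet → G.beyond ρ e ⊆ G.beyond ρ f →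
      G.depth ρ e = G.depth ρ f → e = f := by
    intro e f he hf hef hdepth
    have hsub : (G.edgeFinset.filter fun g => G.beyond ρ f ⊆ G.beyond ρ g) ⊆
        G.edgeFinset.filter fun g => G.beyond ρ e ⊆ G.beyond ρ g :=
      Finset.monotone_filter_right _ fun _ _ hfg => hef.trans hfg
    have heq := Finset.eq_of_subset_of_card_le hsub hdepth.le
    have hmem : e ∈ G.edgeFinset.filter fun g => G.beyond ρ f ⊆ G.beyond ρ g :=
      heq ▸ by simpa using he
    exact hG.eq_of_beyond_eq he hf (hef.antisymm (Finset.mem_filter.mp hmem).2)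
  intro e he f hf hdepth
  rw [Finset.mem_coe, mem_separatingEdges] at he hf
  rcases hG.beyond_subset_or_subset he.1 hf.1 he.2 hf.2 with hef | hfe
  · exact key he.1 hf.1 hef hdepth
  · exact (key hf.1 he.1 hfe hdepth.symm).symm

theorem IsTree.existsUnique_depth_eq (hG : G.IsTree) (ρ w : V) {k : ℕ} (hk₁ : 1 ≤ k)
    (hk₂ : k ≤ G.dist ρ w) : ∃! e, e ∈ G.separatingEdges ρ w ∧ G.depth ρ e = k := by
  have hmaps : Set.MapsTo (G.depth ρ) (G.separatingEdges ρ w) (Finset.Icc 1 (G.dist ρ w)) :=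
    fun e he => by
      rw [Finset.mem_coe, mem_separatingEdges] at he
      exact Finset.mem_Icc.mpr ⟨one_le_depth he.1 ρ, hG.depth_le_dist he.2⟩
  obtain ⟨e, he, rfl⟩ := Finset.surjOn_of_injOn_of_card_le _ hmaps (hG.depth_injOn ρ w)
    (by simp [hG.card_separatingEdges]) (Finset.mem_Icc.mpr ⟨hk₁, hk₂⟩)
  exact ⟨e, ⟨he, rfl⟩, fun f hf => hG.depth_injOn ρ w hf.1 he hf.2⟩

/-- The centre is the midpoint of a diametral pair. -/
theorem IsTree.exists_forall_dist_eq (hG : G.IsTree) {ι : Type*} [Finite ι] [Nonempty ι]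
    (f : ι → V) (heven : ∀ i j, Even (G.dist (f i) (f j)))
    (hultra : ∀ i j k, G.dist (f i) (f k) ≤ max (G.dist (f i) (f j)) (G.dist (f j) (f k))) :
    ∃ ρ r, ∀ i, G.dist ρ (f i) = r := by
  obtain ⟨⟨u, v⟩, hmax⟩ := Finite.exists_max fun p : ι × ι => G.dist (f p.1) (f p.2)
  obtain ⟨r, hr⟩ := heven u v
  obtain ⟨m, hum, hm⟩ :=
    hG.connected.exists_dist_eq_and_dist_add_dist_eq (f u) (f v) (k := r) (by omega)
  refine ⟨m, r, fun i => ?_⟩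
  have hui : G.dist (f u) (f i) ≤ G.dist (f u) (f v) := hmax (u, i)
  have hvi : G.dist (f v) (f i) ≤ G.dist (f u) (f v) := hmax (v, i)
  have huiv := hultra u i v
  have hside := hG.dist_add_dist_eq_or hm (f i)
  have htu : G.dist (f u) (f i) ≤ G.dist (f u) m + G.dist m (f i) := hG.connected.dist_triangle
  have htv : G.dist (f v) (f i) ≤ G.dist (f v) m + G.dist m (f i) := hG.connected.dist_triangle
  have hiv : G.dist (f i) (f v) = G.dist (f v) (f i) := dist_comm
  have hmv : G.dist m (f v) = G.dist (f v) m := dist_comm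
  omega

end Distance

end SimpleGraph

section

variable {α : Type}

def SplitSeparates (σ : Finset (Finset α)) (x y : α) : Prop := ∃ A ∈ σ, x ∈ A ∧ y ∉ A

theorem splitSeparates_pair [Fintype α] [DecidableEq α] (A : Finset α) (x y : α) :
    SplitSeparates {A, Aᶜ} x y ↔ (x ∈ A ↔ y ∉ A) := by
  simp only [SplitSeparates, Finset.mem_insert, Finset.mem_singleton, exists_eq_or_imp,
    exists_eq_left, Finset.mem_compl]
  tauto

theorem Multiset.card_filter_iff_not_add (s : Multiset α) (p q : α → Prop) [DecidablePred p]
    [DecidablePred q] :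
    card (s.filter fun a => p a ↔ ¬ q a) + 2 * card (s.filter fun a => p a ∧ q a) =
      card (s.filter p) + card (s.filter q) := by
  induction s using Multiset.induction_on with
  | empty => simp
  | cons a s ih =>
    by_cases hp : p a <;> by_cases hq : q a <;> simp [hp, hq] <;> omega

theorem IsPartition.card_filter_mem [DecidableEq α] {π : Finset (Finset α)} (hπ : IsPartition π)
    (x : α) :
    (π.filter (x ∈ ·)).card = 1 := by
  obtain ⟨A, hA, huniq⟩ := hπ.2 x
  refine Finset.card_eq_one.mpr ⟨A, Finset.eq_singleton_iff_unique_mem.mpr ⟨?_, fun B hB => ?_⟩⟩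
  · exact Finset.mem_filter.mpr hA
  · exact huniq B (Finset.mem_filter.mp hB)

theorem card_bind_filter_mem [DecidableEq α] {P : Multiset (Finset (Finset α))}
    (hP : ∀ π ∈ P, IsPartition π) (x : α) :
    Multiset.card ((P.bind Finset.val).filter (x ∈ ·)) = Multiset.card P := by
  have hone : ∀ π ∈ P,
      (Multiset.card ∘ fun π : Finset (Finset α) => π.val.filter (x ∈ ·)) π = 1 :=
    fun π hπ => (hP π hπ).card_filter_mem x
  rw [Multiset.filter_bind, Multiset.card_bind, Multiset.map_congr rfl hone]
  simp

theorem min_le_card_filter_mem_and_mem [DecidableEq α] {Q : Multiset (Finset α)}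
    (hQ : ∀ A ∈ Q, ∀ B ∈ Q, A ∩ B = ∅ ∨ A ∩ B = A ∨ A ∩ B = B) (x y z : α) :
    min (Multiset.card (Q.filter fun A => x ∈ A ∧ y ∈ A))
        (Multiset.card (Q.filter fun A => y ∈ A ∧ z ∈ A)) ≤
      Multiset.card (Q.filter fun A => x ∈ A ∧ z ∈ A) := by
  have key : (∀ A ∈ Q, x ∈ A → y ∈ A → z ∈ A) ∨ (∀ A ∈ Q, y ∈ A → z ∈ A → x ∈ A) := by
    by_contra! ⟨⟨A, hA, hxA, hyA, hzA⟩, ⟨B, hB, hyB, hzB, hxB⟩⟩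
    rcases hQ A hA B hB with h | h | h
    · simpa [h] using Finset.mem_inter.mpr ⟨hyA, hyB⟩
    · exact hxB (Finset.mem_inter.mp (h ▸ hxA)).2
    · exact hzA (Finset.mem_inter.mp (h ▸ hzB)).1
  rcases key with h | h
  · refine (min_le_left _ _).trans (Multiset.card_le_card ?_)
    rw [Multiset.filter_congr fun A hA => show x ∈ A ∧ y ∈ A ↔ x ∈ A ∧ y ∈ A ∧ z ∈ A from
      ⟨fun hxy => ⟨hxy.1, hxy.2, h A hA hxy.1 hxy.2⟩, fun hxyz => ⟨hxyz.1, hxyz.2.1⟩⟩]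
    exact Multiset.monotone_filter_right _ fun A hA => ⟨hA.1, hA.2.2⟩
  · refine (min_le_right _ _).trans (Multiset.card_le_card ?_)
    rw [Multiset.filter_congr fun A hA => show y ∈ A ∧ z ∈ A ↔ x ∈ A ∧ y ∈ A ∧ z ∈ A from
      ⟨fun hyz => ⟨h A hA hyz.1 hyz.2, hyz⟩, fun hxyz => hxyz.2⟩]
    exact Multiset.monotone_filter_right _ fun A hA => ⟨hA.1, hA.2.2⟩

end

namespace WeakXTree

open SimpleGraph

variable (T : WeakXTree X)

noncomputable def farLabels (ρ : T.V) (e : Sym2 T.V) : Finset X :=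
  Finset.univ.filter fun x => T.G.Separates e ρ (T.lab x)

variable {T}

theorem mem_farLabels {ρ : T.V} {e : Sym2 T.V} {x : X} :
    x ∈ T.farLabels ρ e ↔ T.G.Separates e ρ (T.lab x) := by
  simp [farLabels]

theorem splitOf_eq {e : Sym2 T.V} (he : e ∈ T.G.edgeSet) (ρ : T.V) :
    T.splitOf e = {T.farLabels ρ e, (T.farLabels ρ e)ᶜ} := by
  have hside : ∀ u,
      Finset.univ.filter (fun x => (T.G.deleteEdges {e}).Reachable u (T.lab x)) =
        if T.G.Separates e ρ u then T.farLabels ρ e else (T.farLabels ρ e)ᶜ := by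
    intro u
    ext x
    have := T.isTree.separates_iff_separates_iff_not he ρ u (T.lab x)
    split_ifs <;> simp only [Finset.mem_filter, Finset.mem_univ, true_and, Finset.mem_compl,
      mem_farLabels] <;> unfold Separates at * <;> tauto
  obtain ⟨a, b, -, -, hb⟩ := T.isTree.exists_eq_and_separates he ρ
  ext A
  simp only [splitOf, hside, Finset.mem_image, Finset.mem_univ, true_and, Finset.mem_insert,
    Finset.mem_singleton]
  constructor
  · rintro ⟨u, rfl⟩
    split_ifs <;> simp
  · rintro (rfl | rfl)
    · exact ⟨b, if_pos hb⟩
    · exact ⟨ρ, if_neg fun h => h .rfl⟩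

theorem separates_lab_iff {e : Sym2 T.V} (he : e ∈ T.G.edgeSet) (x y : X) :
    T.G.Separates e (T.lab x) (T.lab y) ↔ SplitSeparates (T.splitOf e) x y := by
  rw [splitOf_eq he (T.lab x), splitSeparates_pair, mem_farLabels, mem_farLabels]
  have : ¬ T.G.Separates e (T.lab x) (T.lab x) := fun h => h .rfl
  tauto

theorem dist_lab_eq_card_filter_splits (x y : X) :
    T.G.dist (T.lab x) (T.lab y) =
      Multiset.card (T.splits.filter fun σ => SplitSeparates σ x y) := by
  rw [← T.isTree.card_separatingEdges, splits, Multiset.filter_map, Multiset.card_map,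
    separatingEdges, Finset.card_def, Finset.filter_val]
  exact congrArg _ (Multiset.filter_congr fun e he =>
    separates_lab_iff (mem_edgeFinset.mp he) x y)

theorem dist_lab_add_two_mul_card_filter {P : Multiset (Finset (Finset X))}
    (hP : ∀ π ∈ P, IsPartition π) (hPT : systemSplits P = T.splits) (x y : X) :
    T.G.dist (T.lab x) (T.lab y) +
        2 * Multiset.card ((P.bind Finset.val).filter fun A => x ∈ A ∧ y ∈ A) =
      2 * Multiset.card P := by
  have hsplits : systemSplits P = (P.bind Finset.val).map fun A => {A, Aᶜ} := by
    rw [systemSplits, Multiset.map_bind]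
    rfl
  rw [dist_lab_eq_card_filter_splits, ← hPT, hsplits, Multiset.filter_map, Multiset.card_map]
  simp only [Function.comp_def, splitSeparates_pair]
  have := Multiset.card_filter_iff_not_add (P.bind Finset.val) (x ∈ ·) (y ∈ ·)
  rw [card_bind_filter_mem hP, card_bind_filter_mem hP] at this
  omega

theorem exists_forall_dist_lab_eq [Nonempty X] {P : Multiset (Finset (Finset X))}
    (hP : IsPartitionSystem P) (hH : Hierarchical P) (hPT : systemSplits P = T.splits) :
    ∃ ρ r, ∀ x, T.G.dist ρ (T.lab x) = r := by
  have hQ : ∀ A ∈ P.bind Finset.val, ∀ B ∈ P.bind Finset.val,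
      A ∩ B = ∅ ∨ A ∩ B = A ∨ A ∩ B = B := by
    simp only [Multiset.mem_bind, Finset.mem_val]
    rintro A ⟨π₁, hπ₁, hA⟩ B ⟨π₂, hπ₂, hB⟩
    exact hH π₁ hπ₁ π₂ hπ₂ A hA B hB
  have hdist := dist_lab_add_two_mul_card_filter (fun π hπ => (hP π hπ).1) hPT
  refine T.isTree.exists_forall_dist_eq T.lab
    (fun x y => (Nat.even_add.mp (hdist x y ▸ even_two_mul _)).mpr (even_two_mul _))
    fun x y z => ?_
  have := min_le_card_filter_mem_and_mem hQ x y z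
  have := hdist x y
  have := hdist y z
  have := hdist x z
  omega

noncomputable def depthPartition (T : WeakXTree X) (ρ : T.V) (k : ℕ) : Finset (Finset X) :=
  (T.G.edgeFinset.filter (T.G.depth ρ · = k)).image (T.farLabels ρ)

theorem farLabels_nonempty (hS : IsSplitSystem T.splits) {e : Sym2 T.V} (he : e ∈ T.G.edgeSet)
    (ρ : T.V) : (T.farLabels ρ e).Nonempty ∧ (T.farLabels ρ e)ᶜ.Nonempty := by
  have := hS _ (Multiset.mem_map_of_mem T.splitOf (Finset.mem_val.mpr (mem_edgeFinset.mpr he)))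
  rw [splitOf_eq he ρ] at this
  exact ⟨this.1.1 _ (by simp), this.1.1 _ (by simp)⟩

theorem isPartition_depthPartition {ρ : T.V} {r k : ℕ}
    (hρ : ∀ x, T.G.dist ρ (T.lab x) = r) (hk₁ : 1 ≤ k) (hk₂ : k ≤ r)
    (hS : IsSplitSystem T.splits) : IsPartition (T.depthPartition ρ k) := by
  refine ⟨fun A hA => ?_, fun x => ?_⟩
  · obtain ⟨e, he, rfl⟩ := Finset.mem_image.mp hA
    exact (farLabels_nonempty hS (mem_edgeFinset.mp (Finset.mem_filter.mp he).1) ρ).1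
  obtain ⟨e, ⟨hex, hek⟩, huniq⟩ :=
    T.isTree.existsUnique_depth_eq ρ (T.lab x) hk₁ (hρ x ▸ hk₂)
  rw [mem_separatingEdges] at hex
  refine ⟨T.farLabels ρ e, ⟨Finset.mem_image_of_mem _ ?_, mem_farLabels.mpr hex.2⟩, ?_⟩
  · exact Finset.mem_filter.mpr ⟨mem_edgeFinset.mpr hex.1, hek⟩
  rintro A ⟨hA, hxA⟩
  obtain ⟨f, hf, rfl⟩ := Finset.mem_image.mp hA
  rw [Finset.mem_filter, mem_edgeFinset] at hf
  rw [huniq f ⟨mem_separatingEdges.mpr ⟨hf.1, mem_farLabels.mp hxA⟩, hf.2⟩]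

theorem two_le_card_depthPartition [Nonempty X] {ρ : T.V} {r k : ℕ}
    (hρ : ∀ x, T.G.dist ρ (T.lab x) = r) (hk₁ : 1 ≤ k) (hk₂ : k ≤ r)
    (hS : IsSplitSystem T.splits) : 2 ≤ (T.depthPartition ρ k).card := by
  have hπ := isPartition_depthPartition hρ hk₁ hk₂ hS
  obtain ⟨x⟩ := ‹Nonempty X›
  obtain ⟨A, ⟨hA, -⟩, -⟩ := hπ.2 x
  obtain ⟨e, he, rfl⟩ := Finset.mem_image.mp hA
  obtain ⟨y, hy⟩ := (farLabels_nonempty hS (mem_edgeFinset.mp (Finset.mem_filter.mp he).1) ρ).2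
  obtain ⟨B, ⟨hB, hyB⟩, -⟩ := hπ.2 y
  exact Finset.one_lt_card.mpr ⟨_, hA, B, hB, fun h => Finset.mem_compl.mp hy (h ▸ hyB)⟩

theorem farLabels_inter_eq {e f : Sym2 T.V} (he : e ∈ T.G.edgeSet) (hf : f ∈ T.G.edgeSet)
    (ρ : T.V) :
    T.farLabels ρ e ∩ T.farLabels ρ f = ∅ ∨ T.farLabels ρ e ∩ T.farLabels ρ f = T.farLabels ρ e ∨
      T.farLabels ρ e ∩ T.farLabels ρ f = T.farLabels ρ f := by
  rcases (T.farLabels ρ e ∩ T.farLabels ρ f).eq_empty_or_nonempty with h | ⟨x, hx⟩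
  · exact Or.inl h
  rw [Finset.mem_inter, mem_farLabels, mem_farLabels] at hx
  rcases T.isTree.beyond_subset_or_subset he hf hx.1 hx.2 with h | h
  · exact Or.inr (Or.inl (Finset.inter_eq_left.mpr fun z hz =>
      mem_farLabels.mpr (h (mem_farLabels.mp hz))))
  · exact Or.inr (Or.inr (Finset.inter_eq_right.mpr fun z hz =>
      mem_farLabels.mpr (h (mem_farLabels.mp hz))))

theorem partitionSplits_depthPartition (hS : IsSplitSystem T.splits) (ρ : T.V) (k : ℕ) :
    partitionSplits (T.depthPartition ρ k) =
      (T.G.edgeFinset.filter (T.G.depth ρ · = k)).val.map T.splitOf := by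
  have hinj : Set.InjOn (T.farLabels ρ) (T.G.edgeFinset.filter (T.G.depth ρ · = k)) := by
    intro e he f hf hef
    simp only [Finset.coe_filter, mem_edgeFinset, Set.mem_ofPred_eq] at he hf
    obtain ⟨x, hx⟩ := (farLabels_nonempty hS he.1 ρ).1
    have hfx : x ∈ T.farLabels ρ f := hef ▸ hx
    exact T.isTree.depth_injOn ρ (T.lab x)
      (mem_separatingEdges.mpr ⟨he.1, mem_farLabels.mp hx⟩)
      (mem_separatingEdges.mpr ⟨hf.1, mem_farLabels.mp hfx⟩) (he.2.trans hf.2.symm)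
  rw [partitionSplits, depthPartition, Finset.image_val_of_injOn hinj, Multiset.map_map]
  exact Multiset.map_congr rfl fun e he =>
    (splitOf_eq (mem_edgeFinset.mp (Finset.mem_filter.mp he).1) ρ).symm

theorem systemSplits_depthPartition {ρ : T.V} {r : ℕ} (hρ : ∀ x, T.G.dist ρ (T.lab x) = r)
    (hS : IsSplitSystem T.splits) :
    systemSplits ((Finset.Icc 1 r).val.map (T.depthPartition ρ)) = T.splits := by
  have hmaps : ∀ e ∈ T.G.edgeFinset, T.G.depth ρ e ∈ Finset.Icc 1 r := fun e he => by
    rw [mem_edgeFinset] at he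
    obtain ⟨x, hx⟩ := (farLabels_nonempty hS he ρ).1
    exact Finset.mem_Icc.mpr
      ⟨one_le_depth he ρ, hρ x ▸ T.isTree.depth_le_dist (mem_farLabels.mp hx)⟩
  have hunion := congrArg Finset.val (Finset.disjiUnion_filter_eq_of_maps_to hmaps)
  rw [Finset.disjiUnion_val] at hunion
  rw [systemSplits, Multiset.bind_map, splits, ← hunion, Multiset.map_bind]
  exact Multiset.bind_congr fun k _ => partitionSplits_depthPartition hS ρ k

theorem exists_hierarchical_of_forall_dist_lab_eq [Nonempty X] {ρ : T.V} {r : ℕ}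
    (hρ : ∀ x, T.G.dist ρ (T.lab x) = r) (hS : IsSplitSystem T.splits) :
    ∃ P, IsPartitionSystem P ∧ Hierarchical P ∧ systemSplits P = T.splits := by
  refine ⟨(Finset.Icc 1 r).val.map (T.depthPartition ρ), ?_, ?_,
    systemSplits_depthPartition hρ hS⟩
  · simp only [IsPartitionSystem, Multiset.mem_map, Finset.mem_val, Finset.mem_Icc]
    rintro _ ⟨k, ⟨hk₁, hk₂⟩, rfl⟩
    exact ⟨isPartition_depthPartition hρ hk₁ hk₂ hS, two_le_card_depthPartition hρ hk₁ hk₂ hS⟩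
  · simp only [Hierarchical, Multiset.mem_map]
    rintro _ ⟨k, -, rfl⟩ _ ⟨l, -, rfl⟩ A hA B hB
    obtain ⟨e, he, rfl⟩ := Finset.mem_image.mp hA
    obtain ⟨f, hf, rfl⟩ := Finset.mem_image.mp hB
    exact farLabels_inter_eq (mem_edgeFinset.mp (Finset.mem_filter.mp he).1)
      (mem_edgeFinset.mp (Finset.mem_filter.mp hf).1) ρ

end WeakXTree

theorem stmt_17_general {X : Type} [Fintype X] [DecidableEq X] (hX : 2 ≤ Fintype.card X)
    (S : Multiset (Finset (Finset X))) (hS : IsSplitSystem S)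
    (T : WeakXTree X) (hT : T.splits = S) :
    (∃ P : Multiset (Finset (Finset X)),
        IsPartitionSystem P ∧ Hierarchical P ∧ systemSplits P = S) ↔
      ∃ ρ : T.V, ∀ u v : T.V, u ∈ Set.range T.lab → v ∈ Set.range T.lab →
        T.G.dist ρ u = T.G.dist ρ v := by
  subst hT
  have : Nonempty X := Fintype.card_pos_iff.mp (by omega)
  constructor
  · rintro ⟨P, hP, hH, hPT⟩
    obtain ⟨ρ, r, hρ⟩ := WeakXTree.exists_forall_dist_lab_eq hP hH hPT
    exact ⟨ρ, by rintro _ _ ⟨x, rfl⟩ ⟨y, rfl⟩; rw [hρ, hρ]⟩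
  · rintro ⟨ρ, hρ⟩
    exact WeakXTree.exists_hierarchical_of_forall_dist_lab_eq
      (fun x => hρ _ _ ⟨x, rfl⟩ ⟨this.some, rfl⟩) hS

/-- for a compatible split system `Σ` there is a hierarchical
partition system `Π` with `Σ_Π = Σ` iff `T_Σ` has a vertex `ρ` equidistant from
all labelled vertices. -/
theorem stmt_17 {X : Type} [Fintype X] [DecidableEq X] (hX : 2 ≤ Fintype.card X)
    (S : Multiset (Finset (Finset X))) (hS : IsSplitSystem S)
    (hcomp : CompatibleSystem S)
    (T : WeakXTree X) (hT : T.splits = S) :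
    (∃ P : Multiset (Finset (Finset X)),
        IsPartitionSystem P ∧ Hierarchical P ∧ systemSplits P = S) ↔
      ∃ ρ : T.V, ∀ u v : T.V, u ∈ Set.range T.lab → v ∈ Set.range T.lab →
        T.G.dist ρ u = T.G.dist ρ v :=
  stmt_17_general hX S hS T hT
end

section
/- Let Σ be a compatible split system on X such that there exists at least one hierarchical partition system Π₀ with Σ_{Π₀} = Σ, and let Π be a partition system on X with Σ_Π = Σ. Then Π is hierarchical if and only if Π is of minimum size among all partition systems Π' with Σ_{Π'} = Σ (i.e., |Π| ≤ |Π'| for all such Π'). -/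
open scoped Classical

variable {X : Type} [Fintype X] [DecidableEq X]

/-!
Let `F` and `G` be the multisets of all parts of `Π` and of a hierarchical `Π₀` with
`Σ_Π = Σ_{Π₀}`. The split `{A, Aᶜ}` arises only from the parts `A` and `Aᶜ`, so after
cancelling the common parts, the remaining parts `G - F` of `Π₀` are exactly the complements
of the remaining parts `F - G` of `Π`. Every point lies in exactly one part of each partition, so
counting the parts through `x` gives `|Π| + 2 d = |Π₀| + |G - F|`, where `d` is the number of
members of `G - F` containing `x`; in particular `d` does not depend on `x`.

`G - F` is laminar. In a laminar family of proper subsets in which every point lies in `d`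
members, a point `x` and a point `y` outside the largest member through `x` lie in no common
member, so there are at least `2d` members; hence `|Π₀| ≤ |Π|`. If `|Π| ≤ |Π₀|`, the family
has exactly `2d` members, every member contains `x` or `y`, and the members through `y` are all
equal to the complement of the largest member through `x`. Since `G - F` cannot contain both a set
and its complement, it is empty, so `Π` has the same parts as `Π₀` and is hierarchical.
-/

open Multiset

lemma Multiset.countP_mono_left {α : Type*} {s : Multiset α} {p q : α → Prop}
    [DecidablePred p] [DecidablePred q] (h : ∀ a ∈ s, p a → q a) :
    s.countP p ≤ s.countP q :=
  Quot.inductionOn s (fun _ h => List.countP_mono_left (by simpa using h)) h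

lemma Multiset.forall_imp_of_countP_le {α : Type*} {s : Multiset α} {p q : α → Prop}
    [DecidablePred p] [DecidablePred q] (h : ∀ a ∈ s, p a → q a)
    (hc : s.countP q ≤ s.countP p) : ∀ a ∈ s, q a → p a := by
  have hsplit := countP_eq_countP_filter_add s q p
  have hp : (s.filter p).countP q = s.countP p := by
    rw [countP_eq_card.2 fun a ha => h a (mem_of_mem_filter ha) (of_mem_filter ha),
      countP_eq_card_filter]
  have hnp : (s.filter fun a => ¬p a).countP q = 0 := by omega
  intro a ha hqa
  by_contra hpa
  exact countP_eq_zero.1 hnp a (mem_filter.2 ⟨ha, hpa⟩) hqa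

def IsLaminar {α : Type*} (F : Multiset (Finset α)) : Prop :=
  ∀ A ∈ F, ∀ B ∈ F, Disjoint A B ∨ A ⊆ B ∨ B ⊆ A

namespace IsLaminar

lemma mono {α : Type*} {F G : Multiset (Finset α)} (hG : IsLaminar G) (h : F ≤ G) :
    IsLaminar F :=
  fun A hA B hB => hG A (mem_of_le h hA) B (mem_of_le h hB)

lemma exists_max_of_mem {α : Type*} {F : Multiset (Finset α)} (hF : IsLaminar F) {x : α}
    (hx : ∃ A ∈ F, x ∈ A) : ∃ C ∈ F, x ∈ C ∧ ∀ A ∈ F, x ∈ A → A ⊆ C := by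
  obtain ⟨A₀, hA₀, hxA₀⟩ := hx
  obtain ⟨C, hC, hCmax⟩ := (F.filter (x ∈ ·)).toFinset.exists_max_image Finset.card
    ⟨A₀, by simpa using ⟨hA₀, hxA₀⟩⟩
  simp only [mem_toFinset, mem_filter, and_imp] at hC hCmax
  refine ⟨C, hC.1, hC.2, fun A hA hxA => ?_⟩
  rcases hF A hA C hC.1 with hAC | hAC | hCA
  · exact absurd hC.2 (Finset.disjoint_left.1 hAC hxA)
  · exact hAC
  · exact (Finset.eq_of_subset_of_card_le hCA (hCmax A hA hxA)).ge

variable {F : Multiset (Finset X)}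

lemma two_mul_le_card [Nonempty X] (hF : IsLaminar F) (hproper : ∀ A ∈ F, A ≠ Finset.univ)
    {d : ℕ} (hd : ∀ x, F.countP (x ∈ ·) = d) : 2 * d ≤ card F := by
  obtain ⟨x⟩ := ‹Nonempty X›
  rcases Nat.eq_zero_or_pos d with rfl | hpos
  · simp
  obtain ⟨C, hC, -, hCmax⟩ := hF.exists_max_of_mem (countP_pos.1 (hd x ▸ hpos))
  obtain ⟨y, hy⟩ := not_forall.1 (mt Finset.eq_univ_iff_forall.2 (hproper C hC))
  calc 2 * d = F.countP (x ∈ ·) + F.countP (y ∈ ·) := by rw [hd, hd]; ring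
    _ ≤ F.countP (x ∈ ·) + F.countP (x ∉ ·) :=
      Nat.add_le_add_left
        (countP_mono_left (q := (x ∉ ·)) fun A hA hyA hxA => hy (hCmax A hA hxA hyA)) _
    _ = card F := (card_eq_countP_add_countP _ _).symm

lemma eq_zero_of_card_eq_two_mul (hF : IsLaminar F) (hne : ∀ A ∈ F, A.Nonempty)
    (hproper : ∀ A ∈ F, A ≠ Finset.univ) (hcompl : ∀ A ∈ F, Aᶜ ∉ F) {d : ℕ}
    (hd : ∀ x, F.countP (x ∈ ·) = d) (hcard : card F = 2 * d) : F = 0 := by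
  by_contra hF0
  obtain ⟨A₀, hA₀⟩ := exists_mem_of_ne_zero hF0
  obtain ⟨x, hxA₀⟩ := hne A₀ hA₀
  obtain ⟨C, hC, hxC, hCmax⟩ := hF.exists_max_of_mem ⟨A₀, hA₀, hxA₀⟩
  obtain ⟨y, hyC⟩ := not_forall.1 (mt Finset.eq_univ_iff_forall.2 (hproper C hC))
  have hxy : ∀ A ∈ F, y ∈ A → x ∉ A := fun A hA hyA hxA => hyC (hCmax A hA hxA hyA)
  -- the members through `x` and through `y` are `d + d = card F` many, so they are all of `F`
  have hcover : ∀ A ∈ F, x ∉ A → y ∈ A := by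
    refine forall_imp_of_countP_le hxy ?_
    have := card_eq_countP_add_countP (x ∈ ·) F
    have := hd x
    have := hd y
    omega
  have hdisj : ∀ A ∈ F, y ∈ A → Disjoint A C := by
    intro A hA hyA
    rcases hF A hA C hC with h | h | h
    · exact h
    · exact absurd (h hyA) hyC
    · exact absurd (h hxC) (hxy A hA hyA)
  have hthrough : ∀ z ∉ C, ∀ A ∈ F, y ∈ A → z ∈ A := fun z hz =>
    forall_imp_of_countP_le
      (fun A hA hzA => hcover A hA fun hxA => hz (hCmax A hA hxA hzA)) (by rw [hd, hd])
  obtain ⟨S, hS, hyS⟩ : ∃ S ∈ F, y ∈ S :=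
    countP_pos.1 (hd y ▸ hd x ▸ countP_pos.2 ⟨A₀, hA₀, hxA₀⟩)
  have hSC : S = Cᶜ := by
    ext z
    rw [Finset.mem_compl]
    exact ⟨fun hzS => Finset.disjoint_left.1 (hdisj S hS hyS) hzS,
      fun hz => hthrough z hz S hS hyS⟩
  exact hcompl C hC (hSC ▸ hS)

end IsLaminar

def allParts {α : Type*} (P : Multiset (Finset (Finset α))) : Multiset (Finset α) :=
  P.bind Finset.val

lemma mem_allParts {α : Type*} {P : Multiset (Finset (Finset α))} {A : Finset α} :
    A ∈ allParts P ↔ ∃ π ∈ P, A ∈ π := by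
  simp [allParts]

lemma hierarchical_iff_isLaminar_allParts {α : Type} [DecidableEq α]
    {P : Multiset (Finset (Finset α))} :
    Hierarchical P ↔ IsLaminar (allParts P) := by
  simp only [Hierarchical, IsLaminar, mem_allParts, Finset.disjoint_iff_inter_eq_empty,
    Finset.inter_eq_left, Finset.inter_eq_right]
  constructor
  · rintro h A ⟨π₁, hπ₁, hA⟩ B ⟨π₂, hπ₂, hB⟩
    exact h π₁ hπ₁ π₂ hπ₂ A hA B hB
  · exact fun h π₁ hπ₁ π₂ hπ₂ A hA B hB => h A ⟨π₁, hπ₁, hA⟩ B ⟨π₂, hπ₂, hB⟩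

def toSplit (A : Finset X) : Finset (Finset X) := {A, Aᶜ}

lemma map_toSplit_allParts (P : Multiset (Finset (Finset X))) :
    (allParts P).map toSplit = systemSplits P := by
  rw [allParts, map_bind]
  rfl

lemma toSplit_eq_toSplit_iff {A B : Finset X} : toSplit A = toSplit B ↔ B = A ∨ B = Aᶜ := by
  constructor
  · intro h
    have hB : B ∈ toSplit A := h ▸ Finset.mem_insert_self B {Bᶜ}
    simpa [toSplit] using hB
  · rintro (rfl | rfl)
    · rfl
    · rw [toSplit, toSplit, compl_compl, Finset.pair_comm]

lemma count_map_toSplit [Nonempty X] (F : Multiset (Finset X)) (A : Finset X) :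
    (F.map toSplit).count (toSplit A) = F.count A + F.count Aᶜ := by
  induction F using Multiset.induction_on with
  | empty => simp
  | cons B F ih =>
    have hA : A ≠ Aᶜ := ne_compl_self
    simp only [map_cons, count_cons, ih, toSplit_eq_toSplit_iff]
    by_cases h1 : B = A <;> by_cases h2 : B = Aᶜ <;> simp_all [eq_comm] <;> omega

namespace IsPartition

lemma countP_mem {α : Type} [DecidableEq α] {π : Finset (Finset α)} (hπ : IsPartition π)
    (x : α) : π.val.countP (x ∈ ·) = 1 := by
  obtain ⟨A, hA, huniq⟩ := hπ.2 x
  rw [countP_eq_card_filter, ← Finset.filter_val, Finset.card_val, Finset.card_eq_one]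
  exact ⟨A, Finset.eq_singleton_iff_unique_mem.2
    ⟨Finset.mem_filter.2 hA, fun B hB => huniq B (Finset.mem_filter.1 hB)⟩⟩

lemma ne_univ {α : Type} [Fintype α] {π : Finset (Finset α)} (hπ : IsPartition π)
    (hcard : 2 ≤ π.card) {A : Finset α} (hA : A ∈ π) : A ≠ Finset.univ := by
  rintro rfl
  obtain ⟨B, hB, hBA⟩ := Finset.exists_mem_ne hcard Finset.univ
  obtain ⟨y, hy⟩ := hπ.1 B hB
  obtain ⟨C, -, huniq⟩ := hπ.2 y
  exact hBA ((huniq B ⟨hB, hy⟩).trans (huniq _ ⟨hA, Finset.mem_univ y⟩).symm)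

end IsPartition

namespace IsPartitionSystem

variable {α : Type} {P : Multiset (Finset (Finset α))}

lemma countP_mem_allParts [DecidableEq α] (hP : IsPartitionSystem P) (x : α) :
    (allParts P).countP (x ∈ ·) = card P := by
  induction P using Multiset.induction_on with
  | empty => simp [allParts]
  | cons π P ih =>
    rw [allParts, cons_bind, countP_add, (hP π (mem_cons_self π P)).1.countP_mem, ← allParts,
      ih fun ρ hρ => hP ρ (mem_cons_of_mem hρ), card_cons, add_comm]

lemma nonempty_of_mem_allParts (hP : IsPartitionSystem P) {A : Finset α}
    (hA : A ∈ allParts P) : A.Nonempty := by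
  obtain ⟨π, hπ, hAπ⟩ := mem_allParts.1 hA
  exact (hP π hπ).1.1 A hAπ

lemma ne_univ_of_mem_allParts [Fintype α] (hP : IsPartitionSystem P) {A : Finset α}
    (hA : A ∈ allParts P) : A ≠ Finset.univ := by
  obtain ⟨π, hπ, hAπ⟩ := mem_allParts.1 hA
  exact (hP π hπ).1.ne_univ (hP π hπ).2 hAπ

end IsPartitionSystem

lemma sub_eq_map_compl_sub [Nonempty X] {F G : Multiset (Finset X)}
    (h : F.map toSplit = G.map toSplit) : F - G = (G - F).map compl := by
  ext A
  have hA := congrArg (count (toSplit A)) h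
  rw [count_map_toSplit, count_map_toSplit] at hA
  rw [← compl_compl A, count_map_eq_count' _ _ compl_injective, compl_compl, count_sub,
    count_sub]
  omega

section SameSplits

variable [Nonempty X] {P P₀ : Multiset (Finset (Finset X))}

lemma allParts_sub_eq_map_compl (h : systemSplits P = systemSplits P₀) :
    allParts P - allParts P₀ = (allParts P₀ - allParts P).map compl := by
  apply sub_eq_map_compl_sub
  rw [map_toSplit_allParts, map_toSplit_allParts, h]

lemma exists_countP_mem_sub_allParts_eq (hP : IsPartitionSystem P) (hP₀ : IsPartitionSystem P₀)
    (h : systemSplits P = systemSplits P₀) :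
    ∃ d, (∀ x, (allParts P₀ - allParts P).countP (x ∈ ·) = d) ∧
      card P + 2 * d = card P₀ + card (allParts P₀ - allParts P) := by
  set F := allParts P
  set G := allParts P₀
  have hFG : F - G = (G - F).map compl := allParts_sub_eq_map_compl h
  have hcount : ∀ x, card P + 2 * (G - F).countP (x ∈ ·) = card P₀ + card (G - F) := by
    intro x
    have hF := congrArg (countP (x ∈ ·)) (sub_add_inter F G)
    have hG := congrArg (countP (x ∈ ·)) (sub_add_inter G F)
    rw [countP_add, hFG, countP_map, hP.countP_mem_allParts] at hF
    rw [countP_add, inter_comm, hP₀.countP_mem_allParts] at hG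
    have hsplit := card_eq_countP_add_countP (x ∈ ·) (G - F)
    simp only [Finset.mem_compl, ← countP_eq_card_filter] at hF
    omega
  obtain ⟨x₀⟩ := ‹Nonempty X›
  refine ⟨(G - F).countP (x₀ ∈ ·), fun x => ?_, hcount x₀⟩
  have := hcount x
  have := hcount x₀
  omega

theorem card_le_card_of_hierarchical (hP : IsPartitionSystem P) (hP₀ : IsPartitionSystem P₀)
    (hH : Hierarchical P₀) (h : systemSplits P = systemSplits P₀) : card P₀ ≤ card P := by
  obtain ⟨d, hd, hcard⟩ := exists_countP_mem_sub_allParts_eq hP hP₀ h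
  have hQ : allParts P₀ - allParts P ≤ allParts P₀ := tsub_le_self
  have := ((hierarchical_iff_isLaminar_allParts.1 hH).mono hQ).two_mul_le_card
    (fun A hA => hP₀.ne_univ_of_mem_allParts (mem_of_le hQ hA)) hd
  omega

theorem allParts_eq_of_hierarchical_of_card_le (hP : IsPartitionSystem P)
    (hP₀ : IsPartitionSystem P₀) (hH : Hierarchical P₀) (h : systemSplits P = systemSplits P₀)
    (hle : card P ≤ card P₀) : allParts P = allParts P₀ := by
  obtain ⟨d, hd, hcard⟩ := exists_countP_mem_sub_allParts_eq hP hP₀ h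
  have hge := card_le_card_of_hierarchical hP hP₀ hH h
  set F := allParts P
  set G := allParts P₀
  have hFG : F - G = (G - F).map compl := allParts_sub_eq_map_compl h
  have hQ : G - F ≤ G := tsub_le_self
  have hcompl : ∀ A ∈ G - F, Aᶜ ∉ G - F := by
    intro A hA hAc
    have hA' : A ∈ F - G := by
      rw [hFG, ← compl_compl A]
      exact mem_map_of_mem _ hAc
    rw [← count_pos, count_sub] at hA hA'
    omega
  have hGF : G - F = 0 :=
    ((hierarchical_iff_isLaminar_allParts.1 hH).mono hQ).eq_zero_of_card_eq_two_mul
      (fun A hA => hP₀.nonempty_of_mem_allParts (mem_of_le hQ hA))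
      (fun A hA => hP₀.ne_univ_of_mem_allParts (mem_of_le hQ hA)) hcompl hd (by omega)
  calc F = F - G + F ∩ G := (sub_add_inter F G).symm
    _ = G - F + G ∩ F := by rw [hFG, hGF, map_zero, inter_comm]
    _ = G := sub_add_inter G F

end SameSplits

theorem stmt_18_general {X : Type} [Fintype X] [DecidableEq X] (hX : 2 ≤ Fintype.card X)
    (S : Multiset (Finset (Finset X)))
    (hexists : ∃ P₀ : Multiset (Finset (Finset X)),
      IsPartitionSystem P₀ ∧ Hierarchical P₀ ∧ systemSplits P₀ = S)
    (P : Multiset (Finset (Finset X))) (hP : IsPartitionSystem P)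
    (hPS : systemSplits P = S) :
    Hierarchical P ↔
      ∀ P' : Multiset (Finset (Finset X)), IsPartitionSystem P' →
        systemSplits P' = S → Multiset.card P ≤ Multiset.card P' := by
  have : Nonempty X := Fintype.card_pos_iff.1 (by omega)
  obtain ⟨P₀, hP₀, hH₀, hS₀⟩ := hexists
  refine ⟨fun hH P' hP' hP'S => card_le_card_of_hierarchical hP' hP hH (hP'S.trans hPS.symm),
    fun hmin => ?_⟩
  rw [hierarchical_iff_isLaminar_allParts, allParts_eq_of_hierarchical_of_card_le hP hP₀ hH₀
    (hPS.trans hS₀.symm) (hmin P₀ hP₀ hS₀)]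
  exact hierarchical_iff_isLaminar_allParts.1 hH₀

/-- if some hierarchical partition system realises the compatible
split system `Σ`, then a partition system `Π` with `Σ_Π = Σ` is hierarchical
iff it is of minimum size among all partition systems realising `Σ`. -/
theorem stmt_18 {X : Type} [Fintype X] [DecidableEq X] (hX : 2 ≤ Fintype.card X)
    (S : Multiset (Finset (Finset X))) (hS : IsSplitSystem S)
    (hcomp : CompatibleSystem S)
    (hexists : ∃ P₀ : Multiset (Finset (Finset X)),
      IsPartitionSystem P₀ ∧ Hierarchical P₀ ∧ systemSplits P₀ = S)
    (P : Multiset (Finset (Finset X))) (hP : IsPartitionSystem P)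
    (hPS : systemSplits P = S) :
    Hierarchical P ↔
      ∀ P' : Multiset (Finset (Finset X)), IsPartitionSystem P' →
        systemSplits P' = S → Multiset.card P ≤ Multiset.card P' :=
  stmt_18_general hX S hexists P hP hPS
end

section
/- Let G be a simple cubic graph with vertex set V, |V| ≥ 5, and edge set E. Let X = V and let Σ be the split system on X consisting of the splits {{u,v}, X−{u,v}} for each edge {u,v} ∈ E, each with multiplicity one. Then there exists a partition system Π on X with Σ_Π = Σ if and only if E can be partitioned into three perfect matchings of G. -/
open scoped Classical

variable {X : Type} [Fintype X] [DecidableEq X]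

/-!
A part `A` of a partition in `Π` contributes the split `{A, X − A}`, which must be the split of an
edge `e`. Since `|X| ≥ 5`, the two sides of an edge split have different sizes (`2` and `|X| − 2`),
so edge splits are pairwise distinct and `A` is either `e` or `X − e`. If some part were `X − e`,
every other part would lie inside `e` and hence equal `e`, so `{A, X − A}` would occur twice in
`Σ_Π`, while `Σ` has no repetitions. Hence every partition in `Π` is the set of vertex sets of the
edges of a perfect matching, and `Π` amounts to a decomposition of `E` into perfect matchings.
Conversely such a decomposition gives a partition system. In a cubic graph, counting the edges at
a vertex shows that any decomposition into perfect matchings has exactly three of them.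
-/

open Finset

lemma IsPartition.disjoint {α : Type} {π : Finset (Finset α)} (hπ : IsPartition π) {A B : Finset α}
    (hA : A ∈ π) (hB : B ∈ π) (hAB : A ≠ B) : Disjoint A B :=
  disjoint_left.mpr fun x hxA hxB => hAB ((hπ.2 x).unique ⟨hA, hxA⟩ ⟨hB, hxB⟩)

lemma IsPartition.two_le_card {α : Type} [Fintype α] {π : Finset (Finset α)}
    (hπ : IsPartition π) {A : Finset α} (hA : A ∈ π) (hAX : A ≠ univ) : 2 ≤ #π := by
  obtain ⟨x, hx⟩ : ∃ x, x ∉ A := by simpa [eq_univ_iff_forall] using hAX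
  obtain ⟨B, ⟨hB, hxB⟩, -⟩ := hπ.2 x
  exact one_lt_card.mpr ⟨A, hA, B, hB, fun h => hx (h ▸ hxB)⟩

lemma Multiset.eq_of_map_eq_of_nodup {α β : Type*} {f : α → β} {s t : Multiset α}
    (h : s.map f = t.map f) (ht : (t.map f).Nodup) (hst : ∀ x ∈ s, x ∈ t) : s = t := by
  refine (Multiset.Nodup.ext ((h ▸ ht).of_map f) (ht.of_map f)).mpr
    fun x => ⟨hst x, fun hx => ?_⟩
  obtain ⟨y, hy, hyx⟩ := Multiset.mem_map.mp (h ▸ Multiset.mem_map_of_mem f hx)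
  rwa [← Multiset.inj_on_of_nodup_map ht y (hst y hy) x hx hyx]

lemma Finset.val_add_val_add_val_eq_val_iff {α : Type*} [DecidableEq α]
    {M₁ M₂ M₃ E : Finset α} :
    M₁.val + M₂.val + M₃.val = E.val ↔
      M₁ ∪ M₂ ∪ M₃ = E ∧ Disjoint M₁ M₂ ∧ Disjoint M₁ M₃ ∧ Disjoint M₂ M₃ := by
  have hnodup : (M₁.val + M₂.val + M₃.val).Nodup ↔
      Disjoint M₁ M₂ ∧ Disjoint M₁ M₃ ∧ Disjoint M₂ M₃ := by
    simp only [Multiset.nodup_add, Multiset.disjoint_add_left, Finset.disjoint_val, M₁.nodup,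
      M₂.nodup, M₃.nodup, true_and]
  have hmem : (∀ e, e ∈ M₁.val + M₂.val + M₃.val ↔ e ∈ E.val) ↔ M₁ ∪ M₂ ∪ M₃ = E := by
    simp only [Multiset.mem_add, Finset.mem_val, Finset.ext_iff, Finset.mem_union]
  constructor
  · intro h
    exact ⟨hmem.mp fun e => by rw [h], hnodup.mp (h ▸ E.nodup)⟩
  · rintro ⟨hU, hdisj⟩
    exact (Multiset.Nodup.ext (hnodup.mpr hdisj) E.nodup).mpr (hmem.mpr hU)

lemma Sym2.toFinset_injective {α : Type*} [DecidableEq α] :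
    Function.Injective (Sym2.toFinset : Sym2 α → Finset α) :=
  fun _ _ h => Sym2.ext fun x => by rw [← Sym2.mem_toFinset, h, Sym2.mem_toFinset]

lemma isPartition_image_toFinset_iff {V : Type} [DecidableEq V] {M : Finset (Sym2 V)} :
    IsPartition (M.image Sym2.toFinset) ↔ ∀ v : V, ∃! e : Sym2 V, e ∈ M ∧ v ∈ e := by
  refine ⟨fun h v => ?_, fun h => ⟨?_, fun v => ?_⟩⟩
  · obtain ⟨_, ⟨hA, hvA⟩, hu⟩ := h.2 v
    obtain ⟨e, he, rfl⟩ := mem_image.mp hA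
    refine ⟨e, ⟨he, Sym2.mem_toFinset.mp hvA⟩, fun e' ⟨he', hve'⟩ => ?_⟩
    exact Sym2.toFinset_injective (hu _ ⟨mem_image_of_mem _ he', Sym2.mem_toFinset.mpr hve'⟩)
  · simp only [forall_mem_image]
    exact fun e _ => nonempty_iff_ne_empty.mpr e.toFinset_ne_empty
  · obtain ⟨e, ⟨he, hve⟩, hu⟩ := h v
    refine ⟨e.toFinset, ⟨mem_image_of_mem _ he, Sym2.mem_toFinset.mpr hve⟩, ?_⟩
    rintro _ ⟨hA, hvA⟩
    obtain ⟨e', he', rfl⟩ := mem_image.mp hA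
    rw [hu e' ⟨he', Sym2.mem_toFinset.mp hvA⟩]

lemma card_filter_mem_eq_one {V : Type} [DecidableEq V] {M : Finset (Sym2 V)} {v : V}
    (h : ∃! e : Sym2 V, e ∈ M ∧ v ∈ e) : #(M.filter (v ∈ ·)) = 1 := by
  obtain ⟨e, he, hu⟩ := h
  exact card_eq_one.mpr ⟨e, eq_singleton_iff_unique_mem.mpr
    ⟨mem_filter.mpr he, fun e' he' => hu e' (mem_filter.mp he')⟩⟩

section EdgeSplits

variable {V : Type} [Fintype V] [DecidableEq V]

lemma filter_univ_mem_eq_toFinset (e : Sym2 V) : univ.filter (fun v : V => v ∈ e) = e.toFinset := by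
  ext; simp

def edgeSplit (e : Sym2 V) : Finset (Finset V) := {e.toFinset, e.toFinsetᶜ}

lemma eq_toFinset_of_mem_edgeSplit (hV : 4 < Fintype.card V) {e : Sym2 V} (he : ¬ e.IsDiag)
    {A : Finset V} (hA : A ∈ edgeSplit e) (hA2 : #A ≤ 2) : A = e.toFinset := by
  rcases mem_insert.mp hA with rfl | hA
  · rfl
  · rw [mem_singleton.mp hA, card_compl, Sym2.card_toFinset_of_not_isDiag e he] at hA2
    omega

lemma edgeSplit_injOn (hV : 4 < Fintype.card V) :
    Set.InjOn (edgeSplit : Sym2 V → Finset (Finset V)) {e | ¬ e.IsDiag} :=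
  fun e₁ h₁ _ h₂ h => Sym2.toFinset_injective <|
    eq_toFinset_of_mem_edgeSplit hV h₂ (h ▸ mem_insert_self _ _)
      (Sym2.card_toFinset_of_not_isDiag e₁ h₁).le

lemma two_le_card_image_toFinset (hV : 2 < Fintype.card V) {M : Finset (Sym2 V)}
    (hM : ∀ v : V, ∃! e : Sym2 V, e ∈ M ∧ v ∈ e) : 2 ≤ #(M.image Sym2.toFinset) := by
  obtain ⟨v⟩ : Nonempty V := Fintype.card_pos_iff.mp (by omega)
  obtain ⟨e, ⟨he, -⟩, -⟩ := hM v
  refine (isPartition_image_toFinset_iff.mpr hM).two_le_card (mem_image_of_mem _ he) fun h => ?_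
  have := e.card_toFinset
  rw [h, card_univ] at this
  split_ifs at this <;> omega

lemma partitionSplits_image_toFinset (M : Finset (Sym2 V)) :
    partitionSplits (M.image Sym2.toFinset) = M.val.map edgeSplit := by
  rw [partitionSplits, image_val_of_injOn Sym2.toFinset_injective.injOn, Multiset.map_map]
  rfl

lemma systemSplits_map_image_toFinset (Ms : Multiset (Finset (Sym2 V))) :
    systemSplits (Ms.map (·.image Sym2.toFinset)) = (Ms.bind Finset.val).map edgeSplit := by
  simp only [systemSplits, Multiset.bind_map, Multiset.map_bind, partitionSplits_image_toFinset]

lemma exists_eq_toFinset_of_partitionSplits_le (hV : 4 < Fintype.card V) {E : Finset (Sym2 V)}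
    (hE : ∀ e ∈ E, ¬ e.IsDiag) {π : Finset (Finset V)} (hπ : IsPartition π) (hπ2 : 2 ≤ #π)
    (hle : partitionSplits π ≤ E.val.map edgeSplit) {A : Finset V} (hA : A ∈ π) :
    ∃ e ∈ E, A = e.toFinset := by
  have hsplit : ∀ B ∈ π, ∃ e ∈ E, B ∈ edgeSplit e := fun B hB => by
    obtain ⟨e, he, heq⟩ := Multiset.mem_map.mp
      (Multiset.mem_of_le hle (Multiset.mem_map_of_mem _ (mem_val.mpr hB)))
    exact ⟨e, he, heq ▸ mem_insert_self _ _⟩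
  have hnodup : (partitionSplits π).Nodup := Multiset.nodup_of_le hle <|
    E.nodup.map_on fun x hx y hy => edgeSplit_injOn hV (hE x hx) (hE y hy)
  obtain ⟨e, he, hAe⟩ := hsplit A hA
  have he2 := Sym2.card_toFinset_of_not_isDiag e (hE e he)
  refine ⟨e, he, ?_⟩
  by_contra hne
  have hAc : Aᶜ = e.toFinset := by
    rcases mem_insert.mp hAe with h | h
    · exact absurd h hne
    · rw [mem_singleton.mp h, compl_compl]
  obtain ⟨B, hB, hBA⟩ := π.exists_mem_ne hπ2 A
  have hBsub : B ⊆ e.toFinset :=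
    hAc ▸ subset_compl_iff_disjoint_right.mpr (hπ.disjoint hB hA hBA)
  obtain ⟨e', he', hBsplit⟩ := hsplit B hB
  have hBe' : B = e'.toFinset :=
    eq_toFinset_of_mem_edgeSplit hV (hE e' he') hBsplit ((card_le_card hBsub).trans he2.le)
  have hBAc : B = Aᶜ := hAc ▸ eq_of_subset_of_card_le hBsub (by
    rw [he2, hBe', Sym2.card_toFinset_of_not_isDiag e' (hE e' he')])
  refine hBA (Multiset.inj_on_of_nodup_map hnodup B (mem_val.mpr hB) A (mem_val.mpr hA) ?_)
  rw [hBAc, compl_compl, pair_comm]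

lemma image_toFinset_filter_eq_of_partitionSplits_le (hV : 4 < Fintype.card V)
    {E : Finset (Sym2 V)} (hE : ∀ e ∈ E, ¬ e.IsDiag) {π : Finset (Finset V)}
    (hπ : IsPartition π) (hπ2 : 2 ≤ #π) (hle : partitionSplits π ≤ E.val.map edgeSplit) :
    (E.filter (·.toFinset ∈ π)).image Sym2.toFinset = π := by
  ext A
  constructor
  · intro h
    obtain ⟨e, he, rfl⟩ := mem_image.mp h
    exact (mem_filter.mp he).2
  · intro hA
    obtain ⟨e, he, rfl⟩ := exists_eq_toFinset_of_partitionSplits_le hV hE hπ hπ2 hle hA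
    exact mem_image_of_mem _ (mem_filter.mpr ⟨he, hA⟩)

theorem exists_partitionSystem_iff_exists_perfectMatchings (hV : 4 < Fintype.card V)
    {E : Finset (Sym2 V)} (hE : ∀ e ∈ E, ¬ e.IsDiag) :
    (∃ P : Multiset (Finset (Finset V)), IsPartitionSystem P ∧
        systemSplits P = E.val.map edgeSplit) ↔
      ∃ Ms : Multiset (Finset (Sym2 V)), Ms.bind Finset.val = E.val ∧
        ∀ M ∈ Ms, ∀ v : V, ∃! e : Sym2 V, e ∈ M ∧ v ∈ e := by
  constructor
  · rintro ⟨P, hP, hsplits⟩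
    set matching : Finset (Finset V) → Finset (Sym2 V) := fun π => E.filter (·.toFinset ∈ π)
    have hle : ∀ π ∈ P, partitionSplits π ≤ E.val.map edgeSplit :=
      fun π hπ => hsplits ▸ Multiset.le_bind P hπ
    have himage : ∀ π ∈ P, (matching π).image Sym2.toFinset = π := fun π hπ =>
      image_toFinset_filter_eq_of_partitionSplits_le hV hE (hP π hπ).1 (hP π hπ).2 (hle π hπ)
    have hP' : (P.map matching).map (·.image Sym2.toFinset) = P := by
      rw [Multiset.map_map]
      exact (Multiset.map_congr rfl himage).trans P.map_id'
    refine ⟨P.map matching, Multiset.eq_of_map_eq_of_nodup (f := edgeSplit) ?_ ?_ ?_, ?_⟩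
    · rw [← systemSplits_map_image_toFinset, hP', hsplits]
    · exact E.nodup.map_on fun x hx y hy => edgeSplit_injOn hV (hE x hx) (hE y hy)
    · intro e he
      obtain ⟨_, hM, he⟩ := Multiset.mem_bind.mp he
      obtain ⟨π, -, rfl⟩ := Multiset.mem_map.mp hM
      exact (mem_filter.mp he).1
    · intro _ hM
      obtain ⟨π, hπ, rfl⟩ := Multiset.mem_map.mp hM
      refine isPartition_image_toFinset_iff.mp ?_
      rw [himage π hπ]
      exact (hP π hπ).1
  · rintro ⟨Ms, hMs, hperf⟩
    refine ⟨Ms.map (·.image Sym2.toFinset), fun π hπ => ?_, ?_⟩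
    · obtain ⟨M, hM, rfl⟩ := Multiset.mem_map.mp hπ
      exact ⟨isPartition_image_toFinset_iff.mpr (hperf M hM),
        two_le_card_image_toFinset (by omega) (hperf M hM)⟩
    · rw [systemSplits_map_image_toFinset, hMs]

end EdgeSplits

lemma SimpleGraph.card_eq_degree_of_bind_eq_edgeFinset {V : Type} [Fintype V] [DecidableEq V]
    (G : SimpleGraph V) [DecidableRel G.Adj] {Ms : Multiset (Finset (Sym2 V))}
    (hMs : Ms.bind Finset.val = G.edgeFinset.val)
    (hperf : ∀ M ∈ Ms, ∀ v : V, ∃! e : Sym2 V, e ∈ M ∧ v ∈ e) (v : V) :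
    Multiset.card Ms = G.degree v :=
  calc Multiset.card Ms = (Ms.map fun M => #(M.filter (v ∈ ·))).sum := by
        rw [Multiset.map_congr (g := fun _ => 1) rfl
          fun M hM => card_filter_mem_eq_one (hperf M hM v)]
        simp
    _ = Multiset.card ((Ms.bind Finset.val).filter (v ∈ ·)) := by
        rw [Multiset.filter_bind, Multiset.card_bind]
        rfl
    _ = G.degree v := by
        rw [hMs, ← G.card_incidenceFinset_eq_degree, G.incidenceFinset_eq_filter]
        rfl

/-- for a simple cubic graph `G` on at least 5 vertices, the split
system `Σ = {{u,v} | X − {u,v} : {u,v} ∈ E}` is realised by some partition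
system iff the edge set of `G` can be partitioned into three perfect
matchings. -/
theorem stmt_19 {V : Type} [Fintype V] [DecidableEq V] (G : SimpleGraph V)
    [DecidableRel G.Adj] (hcard : 5 ≤ Fintype.card V)
    (hcubic : ∀ v : V, G.degree v = 3) :
    (∃ P : Multiset (Finset (Finset V)), IsPartitionSystem P ∧
        systemSplits P = G.edgeFinset.val.map (fun e =>
          ({Finset.univ.filter (fun v : V => v ∈ e),
            (Finset.univ.filter (fun v : V => v ∈ e))ᶜ} : Finset (Finset V)))) ↔
      ∃ M₁ M₂ M₃ : Finset (Sym2 V),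
        M₁ ∪ M₂ ∪ M₃ = G.edgeFinset ∧
        Disjoint M₁ M₂ ∧ Disjoint M₁ M₃ ∧ Disjoint M₂ M₃ ∧
        (∀ v : V, ∃! e : Sym2 V, e ∈ M₁ ∧ v ∈ e) ∧
        (∀ v : V, ∃! e : Sym2 V, e ∈ M₂ ∧ v ∈ e) ∧
        (∀ v : V, ∃! e : Sym2 V, e ∈ M₃ ∧ v ∈ e) := by
  obtain ⟨v₀⟩ : Nonempty V := Fintype.card_pos_iff.mp (by omega)
  have hloopless : ∀ e ∈ G.edgeFinset, ¬ e.IsDiag :=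
    fun e he => G.not_isDiag_of_mem_edgeSet (SimpleGraph.mem_edgeFinset.mp he)
  simp only [filter_univ_mem_eq_toFinset]
  refine (exists_partitionSystem_iff_exists_perfectMatchings (by omega) hloopless).trans ⟨?_, ?_⟩
  · rintro ⟨Ms, hMs, hperf⟩
    obtain ⟨M₁, M₂, M₃, rfl⟩ := Multiset.card_eq_three.mp
      ((G.card_eq_degree_of_bind_eq_edgeFinset hMs hperf v₀).trans (hcubic _))
    simp only [Multiset.insert_eq_cons, Multiset.cons_bind, Multiset.singleton_bind, ← add_assoc,
      Multiset.mem_cons, Multiset.mem_singleton, forall_eq_or_imp, forall_eq] at hMs hperf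
    obtain ⟨hU, h₁₂, h₁₃, h₂₃⟩ := Finset.val_add_val_add_val_eq_val_iff.mp hMs
    exact ⟨M₁, M₂, M₃, hU, h₁₂, h₁₃, h₂₃, hperf⟩
  · rintro ⟨M₁, M₂, M₃, hU, h₁₂, h₁₃, h₂₃, h₁, h₂, h₃⟩
    refine ⟨{M₁, M₂, M₃}, ?_, ?_⟩
    · simpa only [Multiset.insert_eq_cons, Multiset.cons_bind, Multiset.singleton_bind, add_assoc]
        using Finset.val_add_val_add_val_eq_val_iff.mpr ⟨hU, h₁₂, h₁₃, h₂₃⟩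
    · simp only [Multiset.insert_eq_cons, Multiset.mem_cons, Multiset.mem_singleton,
        forall_eq_or_imp, forall_eq]
      exact ⟨h₁, h₂, h₃⟩
end
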